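/- arXiv:2307.11046 — 3 statements merged into one kernel-verified Lean document; each statement's English description precedes it below -/
import Mathlib

section
/- For any agent-environment pair (λ, e), there exist infinitely many agent bases B such that λ ∉ B and B generates the singleton set {λ} in e. -/
open scoped ENNReal

/-- Histories: finite sequences of action-observation pairs. -/
abbrev Hist (A O : Type) := List (A × O)

/-- An agent maps each history to a probability distribution over actions. -/
abbrev Agent (A O : Type) := Hist A O → PMF A

/-- An environment maps each history and action to a distribution over observations. -/
abbrev Env (A O : Type) := Hist A O → A → PMF O

/-- A history is realizable for `(lam, env)` if every step occurs with positive probability. -/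
def Realizable {A O : Type} (lam : Agent A O) (env : Env A O) (h : Hist A O) : Prop :=
  ∀ i : Fin h.length,
    0 < lam (h.take i) (h.get i).1 ∧ 0 < env (h.take i) (h.get i).1 (h.get i).2

/-- `B` generates `Λ` in `env`: every agent in `Λ` arises from a learning rule over `B`
on all realizable histories. -/
def Generates {A O : Type} (B Λ : Set (Agent A O)) (env : Env A O) : Prop :=
  ∀ lam ∈ Λ, ∃ σ : Hist A O → Agent A O, (∀ h, σ h ∈ B) ∧
    ∀ h, Realizable lam env h → lam h = σ h h

/-- `B` uniformly generates `Λ`: the learning-rule equality holds on all histories. -/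
def UGenerates {A O : Type} (B Λ : Set (Agent A O)) : Prop :=
  ∀ lam ∈ Λ, ∃ σ : Hist A O → Agent A O, (∀ h, σ h ∈ B) ∧ ∀ h, lam h = σ h h

/-- `lam` sometimes reaches `B` in `env`. -/
def SometimesReaches {A O : Type} (lam : Agent A O) (env : Env A O) (B : Set (Agent A O)) : Prop :=
  ∃ h, Realizable lam env h ∧ ∃ b ∈ B,
    ∀ h', Realizable lam env (h ++ h') → lam (h ++ h') = b (h ++ h')

/-- `lam` always reaches `B` in `env`. -/
def AlwaysReaches {A O : Type} (lam : Agent A O) (env : Env A O) (B : Set (Agent A O)) : Prop :=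
  ∀ h, Realizable lam env h → ∃ t : ℕ,
    ∀ h₀, Realizable lam env (h ++ h₀) → t ≤ h₀.length →
      ∃ b ∈ B, ∀ h', Realizable lam env (h ++ h₀ ++ h') →
        lam (h ++ h₀ ++ h') = b (h ++ h₀ ++ h')

/-- The optimal agents in `Λ` with respect to performance `v`. -/
def Optimal {A O : Type} (Λ : Set (Agent A O)) (v : Agent A O → ℝ) : Set (Agent A O) :=
  {lam ∈ Λ | ∀ mu ∈ Λ, v mu ≤ v lam}

/-- `(env, v, Λ, B)` is a CRL problem: `B` generates `Λ` in `env` and every optimal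
agent never reaches `B`. -/
def IsCRL {A O : Type} (env : Env A O) (v : Agent A O → ℝ) (Λ B : Set (Agent A O)) : Prop :=
  Generates B Λ env ∧ ∀ lam ∈ Optimal Λ v, ¬ SometimesReaches lam env B

theorem stmt0 {A O : Type} [Countable A] [Countable O] [Nontrivial A] [Nonempty O]
    (lam : Agent A O) (env : Env A O) :
    {B : Set (Agent A O) | B.Nonempty ∧ lam ∉ B ∧ Generates B {lam} env}.Infinite := by
  classical
  obtain ⟨a, b, hab⟩ := exists_pair_ne A
  obtain ⟨o⟩ := ‹Nonempty O›
  -- for each PMF, produce a different PMF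
  have hpure : (PMF.pure a : PMF A) ≠ PMF.pure b := by
    intro hEq
    have : (PMF.pure a : PMF A) a = PMF.pure b a := by rw [hEq]
    simp only [PMF.pure_apply, if_pos rfl, if_neg hab] at this
    exact one_ne_zero this
  have alt : ∀ p : PMF A, ∃ q : PMF A, q ≠ p := by
    intro p
    by_cases hpa : p = PMF.pure a
    · exact ⟨PMF.pure b, by rw [hpa]; exact fun h => hpure h.symm⟩
    · exact ⟨PMF.pure a, fun h => hpa h.symm⟩
  choose altp haltp using alt
  -- distinguished histories
  set hst : ℕ → Hist A O := fun n => List.replicate n (a, o) with hhst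
  have hst_inj : Function.Injective hst := by
    intro m n hmn
    have := congrArg List.length hmn
    simpa [hhst] using this
  -- modified agents
  set ag : ℕ → Agent A O := fun n h => if h = hst n then altp (lam h) else lam h with hag
  have ag_ne_lam : ∀ n, ag n ≠ lam := by
    intro n hEq
    have := congrFun hEq (hst n)
    simp only [hag, if_pos rfl] at this
    exact haltp (lam (hst n)) this
  have ag_eq : ∀ n h, h ≠ hst n → ag n h = lam h := by
    intro n h hne
    simp [hag, hne]
  have ag_inj : Function.Injective ag := by
    intro m n hmn
    by_contra hne
    have h1 : ag m (hst m) = ag n (hst m) := by rw [hmn]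
    rw [ag_eq n (hst m) (fun h => hne (hst_inj h))] at h1
    simp only [hag, if_pos rfl] at h1
    exact haltp (lam (hst m)) h1
  -- the bases
  set Bs : ℕ → Set (Agent A O) := fun n => {ag (2 * n), ag (2 * n + 1)} with hBs
  refine Set.infinite_of_injective_forall_mem (f := Bs) ?_ ?_
  · intro m n hmn
    by_contra hne
    have hm : ag (2 * m) ∈ Bs n := by rw [← hmn]; left; rfl
    rcases hm with h | h
    · have := ag_inj h; omega
    · have := ag_inj h; omega
  · intro n
    refine ⟨⟨ag (2 * n), Or.inl rfl⟩, ?_, ?_⟩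
    · intro hmem
      rcases hmem with h | h
      · exact ag_ne_lam (2 * n) h.symm
      · exact ag_ne_lam (2 * n + 1) h.symm
    · intro mu hmu
      rcases hmu with rfl
      refine ⟨fun h => if h = hst (2 * n) then ag (2 * n + 1) else ag (2 * n),
        fun h => ?_, fun h _ => ?_⟩
      · by_cases hc : h = hst (2 * n) <;> simp [hc, hBs]
      · by_cases hc : h = hst (2 * n)
        · simp only [if_pos hc]
          exact (ag_eq (2 * n + 1) h (by rw [hc]; intro h; have := hst_inj h; omega)).symm
        · simp only [if_neg hc]
          exact (ag_eq (2 * n) h hc).symm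
end

section
/- Sometimes-reaches is not transitive: there exist an environment e and agent sets Λ¹, Λ², Λ³ such that every agent in Λ¹ sometimes reaches Λ², every agent in Λ² sometimes reaches Λ³, but some agent in Λ¹ never reaches Λ³. -/
open scoped ENNReal

noncomputable def myUnif : PMF Bool := PMF.uniformOfFintype Bool

lemma myUnif_pos (b : Bool) : 0 < myUnif b := by
  simp [myUnif, PMF.uniformOfFintype_apply]

noncomputable def lamA : Agent Bool Bool := fun _ => PMF.pure false

noncomputable def muA : Agent Bool Bool :=
  fun h => if [(false, true)] <+: h then PMF.pure false else myUnif

noncomputable def nuA : Agent Bool Bool := fun _ => myUnif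

theorem stmt15 :
    ∃ (env : Env Bool Bool) (Λ₁ Λ₂ Λ₃ : Set (Agent Bool Bool)),
      (∀ lam ∈ Λ₁, SometimesReaches lam env Λ₂) ∧
      (∀ lam ∈ Λ₂, SometimesReaches lam env Λ₃) ∧
      (∃ lam ∈ Λ₁, ¬ SometimesReaches lam env Λ₃) := by
  refine ⟨fun _ _ => myUnif, {lamA}, {muA}, {nuA}, ?_, ?_, ?_⟩
  · rintro lam rfl
    refine ⟨[(false, true)], ?_, muA, rfl, ?_⟩
    · intro i
      refine ⟨?_, myUnif_pos _⟩
      fin_cases i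
      simp [lamA]
    · intro h' _
      have hpre : [(false, true)] <+: ([(false, true)] ++ h') := ⟨h', rfl⟩
      simp [lamA, muA, hpre]
  · rintro lam rfl
    refine ⟨[(false, false)], ?_, nuA, rfl, ?_⟩
    · intro i
      fin_cases i
      constructor
      · simpa [muA, List.IsPrefix] using myUnif_pos false
      · exact myUnif_pos _
    · intro h' _
      have hpre : ¬ ([(false, true)] <+: ([(false, false)] ++ h')) := by
        rintro ⟨t, ht⟩
        simp at ht
      simp [muA, nuA, hpre]
  · refine ⟨lamA, rfl, ?_⟩
    rintro ⟨h, hreal, b, rfl, hagree⟩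
    have := hagree [] (by simpa using hreal)
    have h2 : lamA (h ++ []) true = nuA (h ++ []) true := by rw [this]
    simp [lamA, nuA, myUnif, PMF.uniformOfFintype_apply] at h2
    exact absurd h2.symm (by norm_num)
end

section
/- The minimal basis of an agent set need not be unique: there exists an agent set Λ with two distinct bases B¹ ≠ B², both of minimal cardinality among bases uniformly generating Λ, such that B¹ and B² each uniformly generate Λ. -/
open scoped ENNReal

/-- `λ⁰`: always plays `a₀` (encoded as `false`). -/
noncomputable def ag0 : Agent Bool Unit := fun _ => PMF.pure false
/-- `λ¹`: always plays `a₁` (encoded as `true`). -/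
noncomputable def ag1 : Agent Bool Unit := fun _ => PMF.pure true
/-- `λ²`: plays `a₀` on even-length histories and `a₁` on odd-length ones. -/
noncomputable def ag2 : Agent Bool Unit := fun h => PMF.pure (decide (h.length % 2 = 1))
/-- `λ³`: plays `a₁` on even-length histories and `a₀` on odd-length ones. -/
noncomputable def ag3 : Agent Bool Unit := fun h => PMF.pure (decide (h.length % 2 = 0))

/-- The agent set `Λ = {λ⁰, λ¹, λ², λ³}`. -/
def fourAgents : Set (Agent Bool Unit) := {ag0, ag1, ag2, ag3}

lemma pure_ff_ne_tt : (PMF.pure false : PMF Bool) ≠ PMF.pure true := by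
  intro h
  have := congrArg (fun p : PMF Bool => p true) h
  simp [PMF.pure_apply] at this

lemma basisCard {B : Set (Agent Bool Unit)} (hB : UGenerates B fourAgents) :
    (2 : Cardinal) ≤ Cardinal.mk ↥B := by
  obtain ⟨σ0, hσ0B, hσ0⟩ := hB ag0 (by simp [fourAgents])
  obtain ⟨σ1, hσ1B, hσ1⟩ := hB ag1 (by simp [fourAgents])
  rw [Cardinal.two_le_iff]
  refine ⟨⟨σ0 [], hσ0B []⟩, ⟨σ1 [], hσ1B []⟩, ?_⟩
  intro h
  have h0 := hσ0 []
  have h1 := hσ1 []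
  have : σ0 [] = σ1 [] := congrArg Subtype.val h
  apply pure_ff_ne_tt
  calc (PMF.pure false : PMF Bool) = ag0 [] := rfl
    _ = σ0 [] [] := h0
    _ = σ1 [] [] := by rw [this]
    _ = ag1 [] := (h1).symm
    _ = PMF.pure true := rfl

lemma pairCard (a b : Agent Bool Unit) :
    Cardinal.mk ↥({a, b} : Set (Agent Bool Unit)) ≤ 2 := by
  calc Cardinal.mk ↥({a, b} : Set (Agent Bool Unit))
      ≤ Cardinal.mk ↥({b} : Set (Agent Bool Unit)) + 1 := Cardinal.mk_insert_le
    _ = 2 := by rw [Cardinal.mk_singleton]; norm_num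

theorem stmt19 :
    ∃ B₁ B₂ : Set (Agent Bool Unit),
      B₁ ≠ B₂ ∧
      UGenerates B₁ fourAgents ∧ UGenerates B₂ fourAgents ∧
      (∀ B : Set (Agent Bool Unit), UGenerates B fourAgents →
        Cardinal.mk ↥B₁ ≤ Cardinal.mk ↥B) ∧
      (∀ B : Set (Agent Bool Unit), UGenerates B fourAgents →
        Cardinal.mk ↥B₂ ≤ Cardinal.mk ↥B) := by
  refine ⟨{ag0, ag1}, {ag2, ag3}, ?_, ?_, ?_, ?_, ?_⟩
  · intro h
    have h0 : ag0 ∈ ({ag2, ag3} : Set (Agent Bool Unit)) := h ▸ (by simp)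
    rcases h0 with h0 | h0
    · have := congrArg (fun f : Agent Bool Unit => f [(false, ())]) h0
      simp only [ag0, ag2] at this
      exact pure_ff_ne_tt (by simpa using this)
    · have := congrArg (fun f : Agent Bool Unit => f []) h0
      simp only [ag0, ag3] at this
      exact pure_ff_ne_tt (by simpa using this)
  · intro lam hlam
    rcases hlam with h | h | h | h
    · exact ⟨fun _ => ag0, fun _ => by simp, fun h' => by rw [h]⟩
    · exact ⟨fun _ => ag1, fun _ => by simp, fun h' => by rw [h]⟩
    · refine ⟨fun h' => if h'.length % 2 = 1 then ag1 else ag0,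
        fun h' => by dsimp only; split <;> simp, fun h' => ?_⟩
      subst h
      by_cases hp : h'.length % 2 = 1 <;> simp [ag0, ag1, ag2, hp]
    · refine ⟨fun h' => if h'.length % 2 = 0 then ag1 else ag0,
        fun h' => by dsimp only; split <;> simp, fun h' => ?_⟩
      subst h
      by_cases hp : h'.length % 2 = 0 <;> simp [ag0, ag1, ag3, hp]
  · intro lam hlam
    rcases hlam with h | h | h | h
    · refine ⟨fun h' => if h'.length % 2 = 0 then ag2 else ag3,
        fun h' => by dsimp only; split <;> simp, fun h' => ?_⟩
      subst h
      rcases Nat.mod_two_eq_zero_or_one h'.length with hp | hp <;>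
        simp [ag0, ag2, ag3, hp]
    · refine ⟨fun h' => if h'.length % 2 = 0 then ag3 else ag2,
        fun h' => by dsimp only; split <;> simp, fun h' => ?_⟩
      subst h
      rcases Nat.mod_two_eq_zero_or_one h'.length with hp | hp <;>
        simp [ag1, ag2, ag3, hp]
    · exact ⟨fun _ => ag2, fun _ => by simp, fun h' => by rw [h]⟩
    · exact ⟨fun _ => ag3, fun _ => by simp, fun h' => by rw [h]⟩
  · intro B hB
    exact le_trans (pairCard ag0 ag1) (basisCard hB)
  · intro B hB
    exact le_trans (pairCard ag2 ag3) (basisCard hB)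
end
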